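/- arXiv:2107.11735 — 2 statements merged into one kernel-verified Lean document; each statement's English description precedes it below -/
import Mathlib

section
/- For every y > 0, ∫₀^y η^{−n₂−1} |u(I(η))| dη + ∫_y^∞ η^{−n₁−1} |u(I(η))| dη < ∞; in fact this sum is bounded above by −(1/n₂)y^{−n₂}|u(I(y))−yI(y)| + (1/n₁)y^{−n₁}|u(I(y))−yI(y)| + (1+1/n₁)∫_y^∞ η^{−n₁}I(η)dη + (1−1/n₂)∫₀^y η^{−n₂}I(η)dη. -/
/-!
Write `ũ y = u (I y) - y * I y`. Concavity of `u` gives `ũ w ≥ u (I z) - w * I z` for all `z`,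
i.e. `-I` is a continuous subgradient of `ũ`; hence `ũ' = -I` and `ũ` is decreasing. Since
`u (I η) = ũ η + η * I η`, on either side of `y` we get
`|u (I η)| ≤ |ũ y| + |ũ η - ũ y| + η * I η`, where `ũ η - ũ y` has a known sign. Integration by
parts, with `η ^ (-n) / (-n)` as antiderivative of `η ^ (-n - 1)`, turns the first two terms into
the boundary term `y ^ (-n) * |ũ y| / |n|` plus `(1 / |n|) * ∫ η ^ (-n) * I η`. This bounds the
truncated integrals uniformly, and letting the truncation go to `0`, resp. `∞`, gives the claim.
-/

open MeasureTheory Set Filter Topology Asymptotics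

theorem ConcaveOn.le_add_mul_sub_of_hasDerivAt {S : Set ℝ} {f : ℝ → ℝ} {f' x y : ℝ}
    (hfc : ConcaveOn ℝ S f) (hx : x ∈ S) (hy : y ∈ S) (hf : HasDerivAt f f' x) :
    f y ≤ f x + f' * (y - x) := by
  rcases lt_trichotomy x y with hxy | rfl | hxy
  · have := hfc.slope_le_of_hasDerivAt hx hy hxy hf
    rw [slope_def_field, div_le_iff₀ (sub_pos.mpr hxy)] at this
    linarith
  · simp
  · have := hfc.le_slope_of_hasDerivAt hy hx hxy hf
    rw [slope_def_field, le_div_iff₀ (sub_pos.mpr hxy)] at this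
    linarith

theorem hasDerivAt_of_forall_add_mul_sub_le {f g : ℝ → ℝ} {s : Set ℝ} {x : ℝ} (hs : s ∈ 𝓝 x)
    (hsub : ∀ z ∈ s, ∀ w ∈ s, f z + (w - z) * g z ≤ f w) (hg : ContinuousAt g x) :
    HasDerivAt f (g x) x := by
  rw [hasDerivAt_iff_isLittleO]
  have hsmall : (fun w => (g w - g x) * (w - x)) =o[𝓝 x] fun w => w - x := by
    have : (fun w => g w - g x) =o[𝓝 x] fun _ => (1 : ℝ) :=
      (isLittleO_one_iff ℝ).mpr (by simpa using (hg.tendsto.sub_const (g x)))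
    simpa using this.mul_isBigO (isBigO_refl (fun w => w - x) (𝓝 x))
  refine IsBigO.trans_isLittleO (IsBigO.of_bound 1 ?_) hsmall
  filter_upwards [hs] with w hw
  have lower := hsub x (mem_of_mem_nhds hs) w hw
  have upper := hsub w hw x (mem_of_mem_nhds hs)
  rw [smul_eq_mul, one_mul, Real.norm_of_nonneg (by linarith), Real.norm_eq_abs]
  calc f w - f x - (w - x) * g x ≤ (g w - g x) * (w - x) := by linarith
    _ ≤ |(g w - g x) * (w - x)| := le_abs_self _

theorem integral_le_sub_add_integral_of_hasDerivAt_of_le {F F' h k : ℝ → ℝ} {a b : ℝ}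
    (hab : a ≤ b) (hF : ∀ x ∈ Icc a b, HasDerivAt F (F' x) x)
    (hh : IntervalIntegrable h volume a b) (hk : IntervalIntegrable k volume a b)
    (hle : ∀ x ∈ Ioo a b, h x ≤ F' x + k x) :
    ∫ x in a..b, h x ≤ F b - F a + ∫ x in a..b, k x := by
  have := intervalIntegral.integral_le_sub_of_hasDeriv_right_of_le (φ := fun x => h x - k x) hab
    (fun x hx => (hF x hx).continuousAt.continuousWithinAt)
    (fun x hx => (hF x (Ioo_subset_Icc_self hx)).hasDerivWithinAt)
    ((intervalIntegrable_iff_integrableOn_Icc_of_le hab).mp (hh.sub hk))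
    (fun x hx => by linarith [hle x hx])
  rw [intervalIntegral.integral_sub hh hk] at this
  linarith

theorem hasDerivAt_rpow_mul_div {G : ℝ → ℝ} {G' p x : ℝ} (hp : p ≠ 0) (hx : 0 < x)
    (hG : HasDerivAt G G' x) :
    HasDerivAt (fun t => t ^ p * G t / p) (x ^ (p - 1) * G x + x ^ p * G' / p) x := by
  refine (((Real.hasDerivAt_rpow_const (Or.inl hx.ne')).mul hG).div_const p).congr_deriv ?_
  field_simp

theorem integrableOn_Ioi_and_integral_le_of_intervalIntegral_le {f : ℝ → ℝ} {a C : ℝ}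
    (hf : ∀ b, IntegrableOn f (Ioc a b)) (hnn : ∀ x ∈ Ioi a, 0 ≤ f x)
    (hC : ∀ b, a ≤ b → ∫ x in a..b, f x ≤ C) :
    IntegrableOn f (Ioi a) ∧ ∫ x in Ioi a, f x ≤ C := by
  have hint : IntegrableOn f (Ioi a) := by
    refine integrableOn_Ioi_of_intervalIntegral_norm_bounded C a hf tendsto_id ?_
    filter_upwards [eventually_ge_atTop a] with b hb
    rw [intervalIntegral.integral_of_le hb, setIntegral_congr_fun measurableSet_Ioc
      (fun x hx => Real.norm_of_nonneg (hnn x hx.1)), ← intervalIntegral.integral_of_le hb]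
    exact hC b hb
  refine ⟨hint, le_of_tendsto (intervalIntegral_tendsto_integral_Ioi a hint tendsto_id) ?_⟩
  filter_upwards [eventually_ge_atTop a] with b hb using hC b hb

theorem integrableOn_Ioo_and_integral_le_of_intervalIntegral_le {f : ℝ → ℝ} {a b C : ℝ}
    (hab : a < b) (hf : ∀ c ∈ Ioo a b, IntegrableOn f (Ioc c b)) (hnn : ∀ x ∈ Ioc a b, 0 ≤ f x)
    (hC : ∀ c ∈ Ioo a b, ∫ x in c..b, f x ≤ C) :
    IntegrableOn f (Ioo a b) ∧ ∫ x in Ioo a b, f x ≤ C := by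
  obtain ⟨c, -, hc, hc_lim⟩ := exists_seq_strictAnti_tendsto' hab
  have hCk : ∀ k, ∫ x in Ioc (c k) b, f x ≤ C := fun k => by
    rw [← intervalIntegral.integral_of_le (hc k).2.le]
    exact hC _ (hc k)
  have hint : IntegrableOn f (Ioc a b) := by
    refine integrableOn_Ioc_of_intervalIntegral_norm_bounded_left (I := C) (fun k => hf _ (hc k))
      hc_lim (Eventually.of_forall fun k => ?_)
    rw [setIntegral_congr_fun measurableSet_Ioc
      (fun x hx => Real.norm_of_nonneg (hnn x ⟨(hc k).1.trans hx.1, hx.2⟩))]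
    exact hCk k
  have hlim : Tendsto (fun k => ∫ x in Ioc (c k) b, f x) atTop (𝓝 (∫ x in Ioc a b, f x)) := by
    refine ((aecover_Ioc_of_Ioc hc_lim tendsto_const_nhds).integral_tendsto_of_countably_generated
      hint).congr fun k => ?_
    rw [Measure.restrict_restrict measurableSet_Ioc,
      inter_eq_left.mpr (Ioc_subset_Ioc_left (hc k).1.le)]
  rw [← integral_Ioc_eq_integral_Ioo]
  exact ⟨hint.mono_set Ioo_subset_Ioc_self, le_of_tendsto' hlim hCk⟩

/-- The paper's `ũ`: for `u` concave with `u' ∘ I = id`, it is `y ↦ sup_{x ≥ 0} (u x - x * y)`. -/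
def convexDual (u I : ℝ → ℝ) (y : ℝ) : ℝ := u (I y) - y * I y

section convexDual

variable {u u' I : ℝ → ℝ}

theorem convexDual_add_mul_sub_le (hu : ConcaveOn ℝ (Ici 0) u)
    (hu' : ∀ c, 0 < c → HasDerivAt u (u' c) c) (hI_pos : ∀ y, 0 < y → 0 < I y)
    (hI : ∀ y, 0 < y → u' (I y) = y) {z w : ℝ} (hz : 0 < z) (hw : 0 < w) :
    convexDual u I z + (w - z) * -I z ≤ convexDual u I w := by
  have := hu.le_add_mul_sub_of_hasDerivAt (hI_pos w hw).le (hI_pos z hz).le (hu' _ (hI_pos w hw))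
  rw [hI w hw] at this
  simp only [convexDual]
  linarith

theorem hasDerivAt_convexDual (hu : ConcaveOn ℝ (Ici 0) u)
    (hu' : ∀ c, 0 < c → HasDerivAt u (u' c) c) (hI_pos : ∀ y, 0 < y → 0 < I y)
    (hI : ∀ y, 0 < y → u' (I y) = y) (hI_cont : ContinuousOn I (Ioi 0)) {y : ℝ} (hy : 0 < y) :
    HasDerivAt (convexDual u I) (-I y) y :=
  hasDerivAt_of_forall_add_mul_sub_le (g := fun t => -I t) (Ioi_mem_nhds hy)
    (fun _ hz _ hw => convexDual_add_mul_sub_le hu hu' hI_pos hI hz hw)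
    (hI_cont.continuousAt (Ioi_mem_nhds hy)).neg

end convexDual

section rpowBounds

variable {f g : ℝ → ℝ}

theorem abs_add_le_abs_add_abs_sub_add {b : ℝ} (a c : ℝ) (hb : 0 ≤ b) :
    |a + b| ≤ |c| + |a - c| + b := by
  have := abs_add_le a b
  have := abs_sub_abs_le_abs_sub a c
  rw [abs_of_nonneg hb] at *
  linarith

theorem antitoneOn_Ioi_of_hasDerivAt_neg (hf : ∀ x, 0 < x → HasDerivAt f (-g x) x)
    (hg0 : ∀ x, 0 < x → 0 ≤ g x) : AntitoneOn f (Ioi 0) :=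
  antitoneOn_of_hasDerivWithinAt_nonpos (convex_Ioi 0)
    (fun x hx => (hf x hx).continuousAt.continuousWithinAt)
    (by simpa using fun x hx => (hf x hx).hasDerivWithinAt)
    (by simpa using fun x hx => hg0 x hx)

theorem continuousOn_rpow_mul (hg : ContinuousOn g (Ioi 0)) (p : ℝ) :
    ContinuousOn (fun x => x ^ p * g x) (Ioi 0) :=
  (continuousOn_id.rpow_const fun _ hx => Or.inl (ne_of_gt hx)).mul hg

theorem continuousOn_rpow_mul_abs_add_mul (hf : ∀ x, 0 < x → HasDerivAt f (-g x) x)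
    (hg : ContinuousOn g (Ioi 0)) (p : ℝ) :
    ContinuousOn (fun x => x ^ p * |f x + x * g x|) (Ioi 0) :=
  continuousOn_rpow_mul (((continuousOn_of_forall_continuousAt fun x hx =>
    (hf x hx).continuousAt).add (continuousOn_id.mul hg)).abs) p

theorem intervalIntegral_rpow_mul_abs_add_mul_le_of_neg {n ε y : ℝ} (hn : n < 0) (hε : 0 < ε)
    (hεy : ε ≤ y) (hf : ∀ x, 0 < x → HasDerivAt f (-g x) x) (hg : ContinuousOn g (Ioi 0))
    (hg0 : ∀ x, 0 < x → 0 ≤ g x) :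
    ∫ x in ε..y, x ^ (-n - 1) * |f x + x * g x| ≤
      -(1 / n) * y ^ (-n) * |f y| + (1 - 1 / n) * ∫ x in ε..y, x ^ (-n) * g x := by
  have hsub : Icc ε y ⊆ Ioi 0 := fun x hx => hε.trans_le hx.1
  have hfy : ∀ x ∈ Icc ε y, f y ≤ f x := fun x hx =>
    antitoneOn_Ioi_of_hasDerivAt_neg hf hg0 (hsub hx) (hsub (right_mem_Icc.2 hεy)) hx.2
  have key := integral_le_sub_add_integral_of_hasDerivAt_of_le hεy
    (F := fun x => x ^ (-n) * (|f y| + (f x - f y)) / (-n))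
    (k := fun x => (1 - 1 / n) * (x ^ (-n) * g x))
    (fun x hx => hasDerivAt_rpow_mul_div (neg_ne_zero.mpr hn.ne) (hsub hx)
      (((hf x (hsub hx)).sub_const (f y)).const_add |f y|))
    (((continuousOn_rpow_mul_abs_add_mul hf hg (-n - 1)).mono hsub).intervalIntegrable_of_Icc hεy)
    ((continuousOn_const.mul ((continuousOn_rpow_mul hg (-n)).mono hsub)).intervalIntegrable_of_Icc
      hεy)
    (fun x hx => ?_)
  · have hFε : 0 ≤ ε ^ (-n) * (|f y| + (f ε - f y)) / (-n) := by
      have := hfy ε (left_mem_Icc.2 hεy)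
      have := abs_nonneg (f y)
      exact div_nonneg (mul_nonneg (Real.rpow_nonneg hε.le _) (by linarith)) (by linarith)
    simp only [intervalIntegral.integral_const_mul, sub_self, add_zero] at key
    have hFy : y ^ (-n) * |f y| / (-n) = -(1 / n) * y ^ (-n) * |f y| := by ring
    linarith
  · have hx0 : 0 < x := hε.trans hx.1
    have habs : |f x + x * g x| ≤ |f y| + (f x - f y) + x * g x := by
      simpa only [abs_of_nonneg (sub_nonneg.mpr (hfy x (Ioo_subset_Icc_self hx)))] using
        abs_add_le_abs_add_abs_sub_add (f x) (f y) (mul_nonneg hx0.le (hg0 x hx0))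
    calc x ^ (-n - 1) * |f x + x * g x|
        ≤ x ^ (-n - 1) * (|f y| + (f x - f y) + x * g x) :=
          mul_le_mul_of_nonneg_left habs (Real.rpow_nonneg hx0.le _)
      _ = _ := by rw [Real.rpow_sub_one hx0.ne']; field_simp; ring

theorem intervalIntegral_rpow_mul_abs_add_mul_le_of_pos {n y R : ℝ} (hn : 0 < n) (hy : 0 < y)
    (hyR : y ≤ R) (hf : ∀ x, 0 < x → HasDerivAt f (-g x) x) (hg : ContinuousOn g (Ioi 0))
    (hg0 : ∀ x, 0 < x → 0 ≤ g x) :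
    ∫ x in y..R, x ^ (-n - 1) * |f x + x * g x| ≤
      1 / n * y ^ (-n) * |f y| + (1 + 1 / n) * ∫ x in y..R, x ^ (-n) * g x := by
  have hsub : Icc y R ⊆ Ioi 0 := fun x hx => hy.trans_le hx.1
  have hfy : ∀ x ∈ Icc y R, f x ≤ f y := fun x hx =>
    antitoneOn_Ioi_of_hasDerivAt_neg hf hg0 (hsub (left_mem_Icc.2 hyR)) (hsub hx) hx.1
  have key := integral_le_sub_add_integral_of_hasDerivAt_of_le hyR
    (F := fun x => x ^ (-n) * (|f y| + (f y - f x)) / (-n))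
    (k := fun x => (1 + 1 / n) * (x ^ (-n) * g x))
    (fun x hx => hasDerivAt_rpow_mul_div (neg_ne_zero.mpr hn.ne') (hsub hx)
      (((hf x (hsub hx)).const_sub (f y)).const_add |f y|))
    (((continuousOn_rpow_mul_abs_add_mul hf hg (-n - 1)).mono hsub).intervalIntegrable_of_Icc hyR)
    ((continuousOn_const.mul ((continuousOn_rpow_mul hg (-n)).mono hsub)).intervalIntegrable_of_Icc
      hyR)
    (fun x hx => ?_)
  · have hFR : R ^ (-n) * (|f y| + (f y - f R)) / (-n) ≤ 0 := by
      have := hfy R (right_mem_Icc.2 hyR)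
      have := abs_nonneg (f y)
      exact div_nonpos_of_nonneg_of_nonpos
        (mul_nonneg (Real.rpow_nonneg (hy.trans_le hyR).le _) (by linarith)) (by linarith)
    simp only [intervalIntegral.integral_const_mul, sub_self, add_zero] at key
    have hFy : y ^ (-n) * |f y| / (-n) = -(1 / n * y ^ (-n) * |f y|) := by ring
    linarith
  · have hx0 : 0 < x := hy.trans hx.1
    have habs : |f x + x * g x| ≤ |f y| + (f y - f x) + x * g x := by
      simpa only [abs_sub_comm, abs_of_nonneg (sub_nonneg.mpr (hfy x (Ioo_subset_Icc_self hx)))]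
        using abs_add_le_abs_add_abs_sub_add (f x) (f y) (mul_nonneg hx0.le (hg0 x hx0))
    calc x ^ (-n - 1) * |f x + x * g x|
        ≤ x ^ (-n - 1) * (|f y| + (f y - f x) + x * g x) :=
          mul_le_mul_of_nonneg_left habs (Real.rpow_nonneg hx0.le _)
      _ = _ := by rw [Real.rpow_sub_one hx0.ne']; field_simp; ring

theorem integrableOn_Ioo_and_integral_rpow_mul_abs_add_mul_le {n y : ℝ} (hn : n < 0) (hy : 0 < y)
    (hf : ∀ x, 0 < x → HasDerivAt f (-g x) x) (hg : ContinuousOn g (Ioi 0))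
    (hg0 : ∀ x, 0 < x → 0 ≤ g x) (hint : IntegrableOn (fun x => x ^ (-n) * g x) (Ioo 0 y)) :
    IntegrableOn (fun x => x ^ (-n - 1) * |f x + x * g x|) (Ioo 0 y) ∧
      ∫ x in Ioo 0 y, x ^ (-n - 1) * |f x + x * g x| ≤
        -(1 / n) * y ^ (-n) * |f y| + (1 - 1 / n) * ∫ x in Ioo 0 y, x ^ (-n) * g x := by
  refine integrableOn_Ioo_and_integral_le_of_intervalIntegral_le hy
    (fun c hc => ((continuousOn_rpow_mul_abs_add_mul hf hg _).mono
      fun x hx => hc.1.trans_le hx.1).integrableOn_Icc.mono_set Ioc_subset_Icc_self)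
    (fun x hx => by have := hx.1; positivity) (fun c hc => ?_)
  refine (intervalIntegral_rpow_mul_abs_add_mul_le_of_neg hn hc.1 hc.2.le hf hg hg0).trans ?_
  have hn' : 0 ≤ 1 - 1 / n := by have := one_div_neg.mpr hn; linarith
  gcongr
  rw [intervalIntegral.integral_of_le hc.2.le, integral_Ioc_eq_integral_Ioo]
  refine setIntegral_mono_set hint ?_ (Ioo_subset_Ioo_left hc.1.le).eventuallyLE
  filter_upwards [ae_restrict_mem measurableSet_Ioo] with x hx
  exact mul_nonneg (Real.rpow_nonneg hx.1.le _) (hg0 x hx.1)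

theorem integrableOn_Ioi_and_integral_rpow_mul_abs_add_mul_le {n y : ℝ} (hn : 0 < n) (hy : 0 < y)
    (hf : ∀ x, 0 < x → HasDerivAt f (-g x) x) (hg : ContinuousOn g (Ioi 0))
    (hg0 : ∀ x, 0 < x → 0 ≤ g x) (hint : IntegrableOn (fun x => x ^ (-n) * g x) (Ioi y)) :
    IntegrableOn (fun x => x ^ (-n - 1) * |f x + x * g x|) (Ioi y) ∧
      ∫ x in Ioi y, x ^ (-n - 1) * |f x + x * g x| ≤
        1 / n * y ^ (-n) * |f y| + (1 + 1 / n) * ∫ x in Ioi y, x ^ (-n) * g x := by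
  refine integrableOn_Ioi_and_integral_le_of_intervalIntegral_le
    (fun b => ((continuousOn_rpow_mul_abs_add_mul hf hg _).mono
      fun x hx => hy.trans_le hx.1).integrableOn_Icc.mono_set Ioc_subset_Icc_self)
    (fun x hx => by have := hy.trans hx; positivity) (fun b hb => ?_)
  refine (intervalIntegral_rpow_mul_abs_add_mul_le_of_pos hn hy hb hf hg hg0).trans ?_
  gcongr
  rw [intervalIntegral.integral_of_le hb]
  refine setIntegral_mono_set hint ?_ Ioc_subset_Ioi_self.eventuallyLE
  filter_upwards [ae_restrict_mem measurableSet_Ioi] with x hx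
  exact mul_nonneg (Real.rpow_nonneg (hy.trans hx).le _) (hg0 x (hy.trans hx))

end rpowBounds

theorem stmt_8_general
    (n₁ n₂ : ℝ)
    (hn₂0 : n₂ < 0) (hn₁1 : 1 < n₁)
    (u u' I : ℝ → ℝ)
    (hu_conc : StrictConcaveOn ℝ (Set.Ici 0) u)
    (hu_deriv : ∀ c : ℝ, 0 < c → HasDerivAt u (u' c) c)
    (hI_pos : ∀ y : ℝ, 0 < y → 0 < I y)
    (hI_left : ∀ y : ℝ, 0 < y → u' (I y) = y)
    (hI_anti : StrictAntiOn I (Set.Ioi 0))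
    (hI_cont : ContinuousOn I (Set.Ioi 0))
    (hI_int : ∀ y : ℝ, 0 < y →
      MeasureTheory.IntegrableOn (fun η => η ^ (-n₂) * I η) (Set.Ioo 0 y) MeasureTheory.volume)
    :
    ∀ y : ℝ, 0 < y →
      MeasureTheory.IntegrableOn (fun η => η ^ (-n₂ - 1) * |u (I η)|) (Set.Ioo 0 y)
        MeasureTheory.volume ∧
      MeasureTheory.IntegrableOn (fun η => η ^ (-n₁ - 1) * |u (I η)|) (Set.Ioi y)
        MeasureTheory.volume ∧
      (∫ η in Set.Ioo 0 y, η ^ (-n₂ - 1) * |u (I η)|) +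
        (∫ η in Set.Ioi y, η ^ (-n₁ - 1) * |u (I η)|) ≤
        -(1 / n₂) * y ^ (-n₂) * |u (I y) - y * I y| +
          (1 / n₁) * y ^ (-n₁) * |u (I y) - y * I y| +
          (1 + 1 / n₁) * (∫ η in Set.Ioi y, η ^ (-n₁) * I η) +
          (1 - 1 / n₂) * (∫ η in Set.Ioo 0 y, η ^ (-n₂) * I η) := by
  intro y hy
  have hdual : ∀ x, 0 < x → HasDerivAt (convexDual u I) (-I x) x := fun x hx =>
    hasDerivAt_convexDual hu_conc.concaveOn hu_deriv hI_pos hI_left hI_cont hx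
  have hI_nonneg : ∀ x, 0 < x → 0 ≤ I x := fun x hx => (hI_pos x hx).le
  have hI_int_Ioi : IntegrableOn (fun x => x ^ (-n₁) * I x) (Ioi y) :=
    (integrableOn_Ioi_rpow_of_lt (by linarith) hy).mul_bdd
      ((hI_cont.mono (Ioi_subset_Ioi hy.le)).aestronglyMeasurable measurableSet_Ioi)
      (ae_restrict_of_forall_mem measurableSet_Ioi fun x hx => by
        rw [Real.norm_of_nonneg (hI_nonneg x (hy.trans hx))]
        exact hI_anti.antitoneOn hy (hy.trans hx) hx.le)
  obtain ⟨hintL, hL⟩ := integrableOn_Ioo_and_integral_rpow_mul_abs_add_mul_le hn₂0 hy hdual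
    hI_cont hI_nonneg (hI_int y hy)
  obtain ⟨hintR, hR⟩ := integrableOn_Ioi_and_integral_rpow_mul_abs_add_mul_le
    (zero_lt_one.trans hn₁1) hy hdual hI_cont hI_nonneg hI_int_Ioi
  simp only [convexDual, sub_add_cancel] at hintL hL hintR hR
  exact ⟨hintL, hintR, by linarith⟩

/-- for every y > 0, ∫₀^y η^{−n₂−1}|u(I(η))|dη + ∫_y^∞ η^{−n₁−1}|u(I(η))|dη < ∞,
with the stated explicit upper bound. -/
theorem stmt_8
    (δ r θ n₁ n₂ : ℝ)
    (hδ : 0 < δ) (hr : 0 < r) (hθ : θ ≠ 0)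
    (hn₂0 : n₂ < 0) (hn₁1 : 1 < n₁)
    (hroot₁ : θ ^ 2 / 2 * n₁ ^ 2 + (δ - r - θ ^ 2 / 2) * n₁ - δ = 0)
    (hroot₂ : θ ^ 2 / 2 * n₂ ^ 2 + (δ - r - θ ^ 2 / 2) * n₂ - δ = 0)
    (u u' I utld : ℝ → ℝ)
    (hu_mono : StrictMonoOn u (Set.Ici 0))
    (hu_conc : StrictConcaveOn ℝ (Set.Ici 0) u)
    (hu_cont : ContinuousOn u (Set.Ici 0))
    (hu_deriv : ∀ c : ℝ, 0 < c → HasDerivAt u (u' c) c)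
    (hu'_cont : ContinuousOn u' (Set.Ioi 0))
    (hu'_top : Filter.Tendsto u' Filter.atTop (nhds 0))
    (hu'_zero : Filter.Tendsto u' (nhdsWithin 0 (Set.Ioi 0)) Filter.atTop)
    (hI_pos : ∀ y : ℝ, 0 < y → 0 < I y)
    (hI_left : ∀ y : ℝ, 0 < y → u' (I y) = y)
    (hI_right : ∀ c : ℝ, 0 < c → I (u' c) = c)
    (hI_anti : StrictAntiOn I (Set.Ioi 0))
    (hI_cont : ContinuousOn I (Set.Ioi 0))
    (hI_zero : Filter.Tendsto I (nhdsWithin 0 (Set.Ioi 0)) Filter.atTop)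
    (hI_top : Filter.Tendsto I Filter.atTop (nhds 0))
    (hutld : ∀ y : ℝ, 0 < y → utld y = u (I y) - y * I y)
    (hI_int : ∀ y : ℝ, 0 < y →
      MeasureTheory.IntegrableOn (fun η => η ^ (-n₂) * I η) (Set.Ioo 0 y) MeasureTheory.volume)
    :
    ∀ y : ℝ, 0 < y →
      MeasureTheory.IntegrableOn (fun η => η ^ (-n₂ - 1) * |u (I η)|) (Set.Ioo 0 y)
        MeasureTheory.volume ∧
      MeasureTheory.IntegrableOn (fun η => η ^ (-n₁ - 1) * |u (I η)|) (Set.Ioi y)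
        MeasureTheory.volume ∧
      (∫ η in Set.Ioo 0 y, η ^ (-n₂ - 1) * |u (I η)|) +
        (∫ η in Set.Ioi y, η ^ (-n₁ - 1) * |u (I η)|) ≤
        -(1 / n₂) * y ^ (-n₂) * |u (I y) - y * I y| +
          (1 / n₁) * y ^ (-n₁) * |u (I y) - y * I y| +
          (1 + 1 / n₁) * (∫ η in Set.Ioi y, η ^ (-n₁) * I η) +
          (1 - 1 / n₂) * (∫ η in Set.Ioo 0 y, η ^ (-n₂) * I η) :=
  stmt_8_general n₁ n₂ hn₂0 hn₁1 u u' I hu_conc hu_deriv hI_pos hI_left hI_anti hI_cont hI_int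
end

section
/- The function J_R is differentiable on (0,∞) and J_R′(y) = −X_R(y) for every y > 0; equivalently, (2/(θ²(n₁−n₂)))[n₂ y^{n₂−1}∫₀^y η^{−n₂−1}ũ(η)dη + n₁ y^{n₁−1}∫_y^∞ η^{−n₁−1}ũ(η)dη] = −(2/(θ²(n₁−n₂)))[y^{n₂−1}∫₀^y η^{−n₂}I(η)dη + y^{n₁−1}∫_y^∞ η^{−n₁}I(η)dη]. -/
/-!
The function `ũ(y) = u(I y) - y I y` is the concave conjugate `sup_{c ≥ 0} (u c - y c)`, the
supremum being attained at `c = I y`. Hence `-I` is a continuous subgradient selection of the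
convex function `ũ`, which makes `ũ` differentiable with `ũ' = -I`, and `ũ ≥ u 0`.

Differentiating `J_R` under the integral signs, the boundary terms `y^{n₂} y^{-n₂-1} ũ(y)` and
`y^{n₁} y^{-n₁-1} ũ(y)` cancel, leaving `n₂ y^{n₂-1} ∫₀^y … + n₁ y^{n₁-1} ∫_y^∞ …`. Integrating by
parts against `η^{-n}` with `ũ' = -I` turns this into `-X_R(y)`; on `(0, y)` the boundary term at
`0` vanishes because, `ũ` being antitone, `ε^{-n₂} (ũ ε - ũ y) ≤ -n₂ ∫₀^ε η^{-n₂-1} (ũ η - ũ y) dη`,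
and on `(y, ∞)` because `ũ` is bounded there.
-/

open MeasureTheory Set Filter Topology Asymptotics

lemma ConcaveOn.sub_mul_le_sub_mul_of_hasDerivAt {S : Set ℝ} {f : ℝ → ℝ} {a x y : ℝ}
    (hfc : ConcaveOn ℝ S f) (hx : x ∈ S) (hy : y ∈ S) (hf : HasDerivAt f a x) :
    f y - a * y ≤ f x - a * x := by
  rcases lt_trichotomy x y with hxy | rfl | hxy
  · have := hfc.slope_le_of_hasDerivAt hx hy hxy hf
    rw [slope_def_field, div_le_iff₀ (sub_pos.2 hxy)] at this
    linarith
  · rfl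
  · have := hfc.le_slope_of_hasDerivAt hy hx hxy hf
    rw [slope_def_field, le_div_iff₀ (sub_pos.2 hxy)] at this
    linarith

lemma hasDerivAt_of_subgradient {f g : ℝ → ℝ} {s : Set ℝ} {x : ℝ} (hs : s ∈ 𝓝 x)
    (hsub : ∀ z ∈ s, ∀ w ∈ s, f z + g z * (w - z) ≤ f w) (hg : ContinuousAt g x) :
    HasDerivAt f (g x) x := by
  have hx : x ∈ s := mem_of_mem_nhds hs
  have hbound : (fun z => f z - f x - (z - x) • g x) =O[𝓝 x] fun z => (g z - g x) * (z - x) := by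
    refine IsBigO.of_bound 1 ?_
    filter_upwards [hs] with z hz
    have h₁ := hsub x hx z hz
    have h₂ := hsub z hz x hx
    rw [smul_eq_mul, one_mul, Real.norm_of_nonneg (by linarith)]
    exact (by linarith : _ ≤ (g z - g x) * (z - x)).trans (Real.le_norm_self _)
  have hsmall : (fun z => (g z - g x) * (z - x)) =o[𝓝 x] fun z => z - x := by
    have h₀ : (fun z => g z - g x) =o[𝓝 x] fun _ => (1 : ℝ) :=
      isLittleO_one_iff ℝ |>.2 (by simpa using hg.sub_const (g x))
    simpa using h₀.mul_isBigO (isBigO_refl (fun z => z - x) (𝓝 x))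
  exact hasDerivAt_iff_isLittleO.2 (hbound.trans_isLittleO hsmall)

section Legendre

variable {u u' I : ℝ → ℝ} {y : ℝ}

lemma sub_mul_le_legendre (hu : ConcaveOn ℝ (Ici 0) u)
    (hu' : ∀ c : ℝ, 0 < c → HasDerivAt u (u' c) c) (hI_pos : ∀ y : ℝ, 0 < y → 0 < I y)
    (hI_left : ∀ y : ℝ, 0 < y → u' (I y) = y) (hy : 0 < y) {c : ℝ} (hc : 0 ≤ c) :
    u c - y * c ≤ u (I y) - y * I y := by
  simpa only [hI_left y hy] using
    hu.sub_mul_le_sub_mul_of_hasDerivAt (hI_pos y hy).le hc (hu' _ (hI_pos y hy))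

lemma hasDerivAt_legendre (hu : ConcaveOn ℝ (Ici 0) u)
    (hu' : ∀ c : ℝ, 0 < c → HasDerivAt u (u' c) c) (hI_pos : ∀ y : ℝ, 0 < y → 0 < I y)
    (hI_left : ∀ y : ℝ, 0 < y → u' (I y) = y) (hI_cont : ContinuousOn I (Ioi 0)) (hy : 0 < y) :
    HasDerivAt (fun y => u (I y) - y * I y) (-I y) y := by
  refine hasDerivAt_of_subgradient (g := fun y => -I y) (Ioi_mem_nhds hy) (fun z hz w hw => ?_)
    (hI_cont.continuousAt (Ioi_mem_nhds hy)).neg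
  linarith [sub_mul_le_legendre hu hu' hI_pos hI_left hw (hI_pos z hz).le]

end Legendre

section IntegrationByParts

variable {f g F : ℝ → ℝ} {p x a b Y : ℝ}

lemma continuousOn_rpow_mul_s10 {s : Set ℝ} (q : ℝ) (hs : ∀ x ∈ s, 0 < x) (hf : ContinuousOn f s) :
    ContinuousOn (fun x => x ^ q * f x) s :=
  ContinuousOn.mul (fun x hx => (Real.continuousAt_rpow_const x q
    (Or.inl (hs x hx).ne')).continuousWithinAt) hf

lemma hasDerivAt_rpow_mul (p : ℝ) (hx : 0 < x) (hf : HasDerivAt f (-g x) x) :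
    HasDerivAt (fun t => t ^ p * f t) (p * (x ^ (p - 1) * f x) - x ^ p * g x) x :=
  ((Real.hasDerivAt_rpow_const (Or.inl hx.ne')).mul hf).congr_deriv (by ring)

lemma antitoneOn_of_hasDerivAt_neg {s : Set ℝ} (hs : Convex ℝ s)
    (hf : ∀ x ∈ s, HasDerivAt f (-g x) x) (hg0 : ∀ x ∈ s, 0 ≤ g x) : AntitoneOn f s :=
  antitoneOn_of_hasDerivWithinAt_nonpos hs (fun x hx => (hf x hx).continuousAt.continuousWithinAt)
    (fun x hx => (hf x (interior_subset hx)).hasDerivWithinAt)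
    (fun x hx => neg_nonpos.2 (hg0 x (interior_subset hx)))

lemma integral_rpow_sub_one_mul_eq_of_pos (p : ℝ) (ha : 0 < a) (hab : a ≤ b)
    (hf : ∀ x ∈ Icc a b, HasDerivAt f (-g x) x) (hg : ContinuousOn g (Icc a b)) :
    p * ∫ x in a..b, x ^ (p - 1) * f x = b ^ p * f b - a ^ p * f a + ∫ x in a..b, x ^ p * g x := by
  have hpos : ∀ x ∈ Icc a b, 0 < x := fun x hx => ha.trans_le hx.1
  rw [← uIcc_of_le hab] at hf hg hpos
  have hF := (continuousOn_rpow_mul_s10 (p - 1) hpos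
    fun x hx => (hf x hx).continuousAt.continuousWithinAt).intervalIntegrable (μ := volume)
  have hG := (continuousOn_rpow_mul_s10 p hpos hg).intervalIntegrable (μ := volume)
  have := intervalIntegral.integral_eq_sub_of_hasDerivAt
    (fun x hx => hasDerivAt_rpow_mul p (hpos x hx) (hf x hx)) ((hF.const_mul p).sub hG)
  rw [intervalIntegral.integral_sub (hF.const_mul p) hG, intervalIntegral.integral_const_mul]
    at this
  linarith

lemma intervalIntegrable_of_integral_le {C : ℝ} (hab : a < b) (hF : ContinuousOn F (Ioc a b))
    (hF0 : ∀ x ∈ Ioc a b, 0 ≤ F x) (hC : ∀ c ∈ Ioc a b, ∫ x in c..b, F x ≤ C) :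
    IntervalIntegrable F volume a b := by
  obtain ⟨c, -, hc, hca⟩ := exists_seq_strictAnti_tendsto' hab
  rw [intervalIntegrable_iff_integrableOn_Ioc_of_le hab.le]
  refine integrableOn_Ioc_of_intervalIntegral_norm_bounded_left (I := C)
    (fun n => ((hF.mono (Icc_subset_Ioc (hc n).1 le_rfl)).integrableOn_Icc.mono_set
      Ioc_subset_Icc_self)) hca (Eventually.of_forall fun n => ?_)
  have hsub : Ioc (c n) b ⊆ Ioc a b := Ioc_subset_Ioc_left (hc n).1.le
  rw [setIntegral_congr_fun measurableSet_Ioc fun x hx => Real.norm_of_nonneg (hF0 x (hsub hx)),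
    ← intervalIntegral.integral_of_le (hc n).2.le]
  exact hC (c n) ⟨(hc n).1, (hc n).2.le⟩

lemma tendsto_intervalIntegral_left_nhdsGT (hY : 0 < Y) (hF : IntervalIntegrable F volume 0 Y) :
    Tendsto (fun ε => ∫ x in ε..Y, F x) (𝓝[>] 0) (𝓝 (∫ x in 0..Y, F x)) := by
  rw [intervalIntegrable_iff_integrableOn_Icc_of_le hY.le, ← uIcc_of_le hY.le] at hF
  rw [← nhdsWithin_Ioo_eq_nhdsGT hY]
  exact (intervalIntegral.continuousOn_primitive_interval_left hF 0 left_mem_uIcc).mono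
    (uIcc_of_le hY.le ▸ Ioo_subset_Icc_self)

lemma tendsto_intervalIntegral_right_nhdsGT (hY : 0 < Y) (hF : IntervalIntegrable F volume 0 Y) :
    Tendsto (fun ε => ∫ x in 0..ε, F x) (𝓝[>] 0) (𝓝 0) := by
  rw [intervalIntegrable_iff_integrableOn_Icc_of_le hY.le, ← uIcc_of_le hY.le] at hF
  rw [← nhdsWithin_Ioo_eq_nhdsGT hY]
  simpa using ((intervalIntegral.continuousOn_primitive_interval hF 0 left_mem_uIcc).mono
    (uIcc_of_le hY.le ▸ Ioo_subset_Icc_self)).tendsto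

lemma rpow_mul_le_integral_rpow_sub_one_mul (hp : 0 < p) (hx : 0 < x)
    (hanti : AntitoneOn f (Ioc 0 x))
    (hint : IntervalIntegrable (fun t => t ^ (p - 1) * f t) volume 0 x) :
    x ^ p * f x ≤ p * ∫ t in 0..x, t ^ (p - 1) * f t := by
  calc x ^ p * f x = p * ∫ t in 0..x, t ^ (p - 1) * f x := by
        rw [intervalIntegral.integral_mul_const, integral_rpow (Or.inl (by linarith)),
          sub_add_cancel, Real.zero_rpow hp.ne', sub_zero]
        field_simp
    _ ≤ p * ∫ t in 0..x, t ^ (p - 1) * f t := by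
        refine mul_le_mul_of_nonneg_left (intervalIntegral.integral_mono_on_of_le_Ioo hx.le
          ((intervalIntegral.intervalIntegrable_rpow' (by linarith)).mul_const _) hint
          fun t ht => ?_) hp.le
        exact mul_le_mul_of_nonneg_left (hanti ⟨ht.1, ht.2.le⟩ ⟨hx, le_rfl⟩ ht.2.le)
          (Real.rpow_nonneg ht.1.le _)

lemma integral_rpow_sub_one_mul_eq_of_apply_eq_zero (hp : 0 < p) (hY : 0 < Y)
    (hf : ∀ x ∈ Ioc 0 Y, HasDerivAt f (-g x) x) (hg : ContinuousOn g (Ioc 0 Y))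
    (hg0 : ∀ x ∈ Ioc 0 Y, 0 ≤ g x) (hfY : f Y = 0)
    (hint : IntervalIntegrable (fun x => x ^ p * g x) volume 0 Y) :
    IntervalIntegrable (fun x => x ^ (p - 1) * f x) volume 0 Y ∧
      p * ∫ x in 0..Y, x ^ (p - 1) * f x = ∫ x in 0..Y, x ^ p * g x := by
  have hanti : AntitoneOn f (Ioc 0 Y) := antitoneOn_of_hasDerivAt_neg (convex_Ioc 0 Y) hf hg0
  have hf0 : ∀ q : ℝ, ∀ x ∈ Ioc 0 Y, 0 ≤ x ^ q * f x := fun q x hx =>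
    mul_nonneg (Real.rpow_nonneg hx.1.le _) (hfY ▸ hanti hx ⟨hY, le_rfl⟩ hx.2)
  have hparts : ∀ ε ∈ Ioc 0 Y, p * ∫ x in ε..Y, x ^ (p - 1) * f x
      = -(ε ^ p * f ε) + ∫ x in ε..Y, x ^ p * g x := fun ε hε => by
    have hsub : Icc ε Y ⊆ Ioc 0 Y := Icc_subset_Ioc hε.1 le_rfl
    rw [integral_rpow_sub_one_mul_eq_of_pos p hε.1 hε.2 (fun x hx => hf x (hsub hx))
      (hg.mono hsub), hfY, mul_zero, zero_sub]
  have hIntF : IntervalIntegrable (fun x => x ^ (p - 1) * f x) volume 0 Y := by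
    refine intervalIntegrable_of_integral_le (C := (∫ x in 0..Y, x ^ p * g x) / p) hY
      (continuousOn_rpow_mul_s10 _ (fun x hx => hx.1)
        fun x hx => (hf x hx).continuousAt.continuousWithinAt)
      (hf0 _) (fun ε hε => ?_)
    rw [le_div_iff₀ hp, mul_comm, hparts ε hε]
    have := intervalIntegral.integral_mono_interval hε.1.le hε.2 le_rfl
      ((ae_restrict_iff' measurableSet_Ioc).2 (ae_of_all _ fun x hx =>
        mul_nonneg (Real.rpow_nonneg hx.1.le _) (hg0 x hx))) hint
    linarith [hf0 p ε hε]
  refine ⟨hIntF, ?_⟩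
  have hIoc : Ioc 0 Y ∈ 𝓝[>] (0 : ℝ) := Ioc_mem_nhdsGT hY
  have hboundary : Tendsto (fun ε => ε ^ p * f ε) (𝓝[>] 0)
      (𝓝 ((∫ x in 0..Y, x ^ p * g x) - p * ∫ x in 0..Y, x ^ (p - 1) * f x)) := by
    refine ((tendsto_intervalIntegral_left_nhdsGT hY hint).sub
      ((tendsto_intervalIntegral_left_nhdsGT hY hIntF).const_mul p)).congr' ?_
    filter_upwards [hIoc] with ε hε
    linarith [hparts ε hε]
  have hvanish : Tendsto (fun ε => ε ^ p * f ε) (𝓝[>] 0) (𝓝 0) := by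
    have htail := (tendsto_intervalIntegral_right_nhdsGT hY hIntF).const_mul p
    rw [mul_zero] at htail
    refine squeeze_zero' ?_ ?_ htail <;> filter_upwards [hIoc] with ε hε
    · exact hf0 p ε hε
    · exact rpow_mul_le_integral_rpow_sub_one_mul hp hε.1 (hanti.mono (Ioc_subset_Ioc_right hε.2))
        (hIntF.mono_set (uIcc_subset_uIcc_left (mem_uIcc_of_le hε.1.le hε.2)))
  linarith [tendsto_nhds_unique hboundary hvanish]

lemma integral_Ioo_rpow_sub_one_mul_eq (hp : 0 < p) (hY : 0 < Y)
    (hf : ∀ x ∈ Ioc 0 Y, HasDerivAt f (-g x) x) (hg : ContinuousOn g (Ioc 0 Y))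
    (hg0 : ∀ x ∈ Ioc 0 Y, 0 ≤ g x) (hint : IntegrableOn (fun x => x ^ p * g x) (Ioo 0 Y)) :
    IntegrableOn (fun x => x ^ (p - 1) * f x) (Ioo 0 Y) ∧
      p * ∫ x in Ioo 0 Y, x ^ (p - 1) * f x = Y ^ p * f Y + ∫ x in Ioo 0 Y, x ^ p * g x := by
  rw [← integrableOn_Ioc_iff_integrableOn_Ioo,
    ← intervalIntegrable_iff_integrableOn_Ioc_of_le hY.le] at hint ⊢
  simp only [← integral_Ioc_eq_integral_Ioo, ← intervalIntegral.integral_of_le hY.le]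
  obtain ⟨hint', hval⟩ := integral_rpow_sub_one_mul_eq_of_apply_eq_zero (f := fun x => f x - f Y)
    hp hY (fun x hx => (hf x hx).sub_const _) hg hg0 (sub_self _) hint
  have hpow : IntervalIntegrable (fun x : ℝ => x ^ (p - 1) * f Y) volume 0 Y :=
    (intervalIntegral.intervalIntegrable_rpow' (by linarith)).mul_const _
  have hsplit : (fun x => x ^ (p - 1) * f x) =
      fun x => x ^ (p - 1) * (f x - f Y) + x ^ (p - 1) * f Y := by
    ext x; ring
  refine ⟨hsplit ▸ hint'.add hpow, ?_⟩
  rw [hsplit, intervalIntegral.integral_add hint' hpow, mul_add, hval,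
    intervalIntegral.integral_mul_const, integral_rpow (Or.inl (by linarith)), sub_add_cancel,
    Real.zero_rpow hp.ne', sub_zero]
  field_simp
  ring

lemma tendsto_rpow_neg_mul_atTop {n : ℝ} (hn : 0 < n) (hY : 0 < Y) (hanti : AntitoneOn f (Ici Y))
    (hf0 : ∀ x ∈ Ici Y, 0 ≤ f x) : Tendsto (fun x => x ^ (-n) * f x) atTop (𝓝 0) := by
  have hdecay := (tendsto_rpow_neg_atTop hn).mul_const (f Y)
  rw [zero_mul] at hdecay
  refine squeeze_zero' ?_ ?_ hdecay <;> filter_upwards [eventually_gt_atTop Y] with x hx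
  · exact mul_nonneg (Real.rpow_nonneg (hY.trans hx).le _) (hf0 x hx.le)
  · exact mul_le_mul_of_nonneg_left (hanti (mem_Ici.2 le_rfl) hx.le hx.le)
      (Real.rpow_nonneg (hY.trans hx).le _)

lemma integral_Ioi_rpow_neg_sub_one_mul_eq_of_nonneg {n : ℝ} (hn : 0 < n) (hY : 0 < Y)
    (hf : ∀ x ∈ Ici Y, HasDerivAt f (-g x) x) (hg : ContinuousOn g (Ioi Y))
    (hg0 : ∀ x ∈ Ici Y, 0 ≤ g x) (hf0 : ∀ x ∈ Ici Y, 0 ≤ f x) :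
    IntegrableOn (fun x => x ^ (-n) * g x) (Ioi Y) ∧
      IntegrableOn (fun x => x ^ (-n - 1) * f x) (Ioi Y) ∧
      n * ∫ x in Ioi Y, x ^ (-n - 1) * f x = Y ^ (-n) * f Y - ∫ x in Ioi Y, x ^ (-n) * g x := by
  have hanti : AntitoneOn f (Ici Y) := antitoneOn_of_hasDerivAt_neg (convex_Ici Y) hf hg0
  set F' := fun x => n * (x ^ (-n - 1) * f x) + x ^ (-n) * g x
  have hderiv : ∀ x ∈ Ici Y, HasDerivAt (fun t => -(t ^ (-n) * f t)) (F' x) x := fun x hx =>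
    ((hasDerivAt_rpow_mul (-n) (hY.trans_le hx) (hf x hx)).neg).congr_deriv (by
      simp only [F', sub_eq_add_neg]; ring)
  have hF'0 : ∀ x ∈ Ioi Y, 0 ≤ n * (x ^ (-n - 1) * f x) ∧ 0 ≤ x ^ (-n) * g x := fun x hx =>
    have hx' : 0 ≤ x := (hY.trans hx).le
    ⟨mul_nonneg hn.le (mul_nonneg (Real.rpow_nonneg hx' _) (hf0 x (Ioi_subset_Ici_self hx))),
      mul_nonneg (Real.rpow_nonneg hx' _) (hg0 x (Ioi_subset_Ici_self hx))⟩
  have hF'pos : ∀ x ∈ Ioi Y, 0 ≤ F' x := fun x hx => add_nonneg (hF'0 x hx).1 (hF'0 x hx).2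
  have hlim : Tendsto (fun t => -(t ^ (-n) * f t)) atTop (𝓝 0) := by
    simpa using (tendsto_rpow_neg_mul_atTop hn hY hanti hf0).neg
  have hint : IntegrableOn F' (Ioi Y) := integrableOn_Ioi_deriv_of_nonneg' hderiv hF'pos hlim
  have hval : ∫ x in Ioi Y, F' x = Y ^ (-n) * f Y := by
    rw [integral_Ioi_of_hasDerivAt_of_nonneg' hderiv hF'pos hlim]
    ring
  have hintg : IntegrableOn (fun x => x ^ (-n) * g x) (Ioi Y) := by
    refine hint.mono' ?_ ((ae_restrict_iff' measurableSet_Ioi).2 (ae_of_all _ fun x hx => ?_))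
    · exact (continuousOn_rpow_mul_s10 _ (fun x hx => hY.trans hx) hg).aestronglyMeasurable
        measurableSet_Ioi
    · rw [Real.norm_of_nonneg (hF'0 x hx).2]
      exact le_add_of_nonneg_left (hF'0 x hx).1
  have hintf : IntegrableOn (fun x => n * (x ^ (-n - 1) * f x)) (Ioi Y) := by
    refine (hint.sub hintg).congr_fun (fun x _ => ?_) measurableSet_Ioi
    simp [F']
  refine ⟨hintg, IntegrableOn.congr_fun (hintf.const_mul n⁻¹) (fun x _ => by field_simp)
    measurableSet_Ioi, ?_⟩
  rw [← integral_const_mul, ← hval, integral_add hintf hintg]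
  ring

lemma integral_Ioi_rpow_neg_sub_one_mul_eq {n m : ℝ} (hn : 0 < n) (hY : 0 < Y)
    (hf : ∀ x ∈ Ici Y, HasDerivAt f (-g x) x) (hg : ContinuousOn g (Ioi Y))
    (hg0 : ∀ x ∈ Ici Y, 0 ≤ g x) (hm : ∀ x ∈ Ici Y, m ≤ f x) :
    IntegrableOn (fun x => x ^ (-n) * g x) (Ioi Y) ∧
      IntegrableOn (fun x => x ^ (-n - 1) * f x) (Ioi Y) ∧
      n * ∫ x in Ioi Y, x ^ (-n - 1) * f x = Y ^ (-n) * f Y - ∫ x in Ioi Y, x ^ (-n) * g x := by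
  obtain ⟨hintg, hint', hval⟩ := integral_Ioi_rpow_neg_sub_one_mul_eq_of_nonneg (f := fun x => f x - m)
    hn hY (fun x hx => (hf x hx).sub_const m) hg hg0 (fun x hx => sub_nonneg.2 (hm x hx))
  have hpow : IntegrableOn (fun x : ℝ => x ^ (-n - 1) * m) (Ioi Y) :=
    (integrableOn_Ioi_rpow_of_lt (by linarith) hY).mul_const m
  have hsplit : (fun x => x ^ (-n - 1) * f x) =
      fun x => x ^ (-n - 1) * (f x - m) + x ^ (-n - 1) * m := by
    ext x; ring
  refine ⟨hintg, hsplit ▸ hint'.add hpow, ?_⟩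
  rw [hsplit, integral_add hint' hpow, mul_add, hval, integral_mul_const,
    integral_Ioi_rpow_of_lt (by linarith) hY, sub_add_cancel]
  field_simp
  ring

end IntegrationByParts

section EndpointDerivative

variable {F : ℝ → ℝ} {a y : ℝ}

lemma hasDerivAt_integral_Ioo (hay : a < y) (hF : IntegrableOn F (Ioo a y))
    (hc : ContinuousOn F (Ioi a)) :
    HasDerivAt (fun z => ∫ x in Ioo a z, F x) (F y) y := by
  refine (intervalIntegral.integral_hasDerivAt_right
    ((intervalIntegrable_iff_integrableOn_Ioo_of_le hay.le).2 hF)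
    (hc.stronglyMeasurableAtFilter isOpen_Ioi y hay)
    (hc.continuousAt (Ioi_mem_nhds hay))).congr_of_eventuallyEq ?_
  filter_upwards [Ioi_mem_nhds hay] with z hz
  rw [intervalIntegral.integral_of_le (le_of_lt hz), integral_Ioc_eq_integral_Ioo]

lemma hasDerivAt_integral_Ioi (hay : a < y) (hF : IntegrableOn F (Ioi a))
    (hc : ContinuousOn F (Ioi a)) :
    HasDerivAt (fun z => ∫ x in Ioi z, F x) (-F y) y := by
  refine ((intervalIntegral.integral_hasDerivAt_right
    ((intervalIntegrable_iff_integrableOn_Ioc_of_le hay.le).2 (hF.mono_set Ioc_subset_Ioi_self))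
    (hc.stronglyMeasurableAtFilter isOpen_Ioi y hay)
    (hc.continuousAt (Ioi_mem_nhds hay))).const_sub (∫ x in Ioi a, F x)).congr_of_eventuallyEq ?_
  filter_upwards [Ioi_mem_nhds hay] with z hz
  rw [← intervalIntegral.integral_Ioi_sub_Ioi hF (le_of_lt hz), sub_sub_cancel]

lemma hasDerivAt_rpow_mul_integral_Ioo_add_rpow_mul_integral_Ioi {φ : ℝ → ℝ} (a b : ℝ)
    {c : ℝ} (hc : 0 ≤ c) (hcy : c < y) (hφ : ContinuousOn φ (Ioi 0))
    (hA : IntegrableOn (fun x => x ^ (-a - 1) * φ x) (Ioo 0 y))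
    (hB : IntegrableOn (fun x => x ^ (-b - 1) * φ x) (Ioi c)) :
    HasDerivAt (fun z => z ^ a * (∫ x in Ioo 0 z, x ^ (-a - 1) * φ x) +
        z ^ b * ∫ x in Ioi z, x ^ (-b - 1) * φ x)
      (a * y ^ (a - 1) * (∫ x in Ioo 0 y, x ^ (-a - 1) * φ x) +
        b * y ^ (b - 1) * ∫ x in Ioi y, x ^ (-b - 1) * φ x) y := by
  have hpow : ∀ c : ℝ, ContinuousOn (fun x : ℝ => x ^ c * φ x) (Ioi 0) := fun c =>
    continuousOn_rpow_mul_s10 c (fun _ hx => hx) hφ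
  have hy : 0 < y := hc.trans_lt hcy
  have hdA := (Real.hasDerivAt_rpow_const (p := a) (Or.inl hy.ne')).mul
    (hasDerivAt_integral_Ioo hy hA (hpow _))
  have hdB := (Real.hasDerivAt_rpow_const (p := b) (Or.inl hy.ne')).mul
    (hasDerivAt_integral_Ioi hcy hB ((hpow _).mono (Ioi_subset_Ioi hc)))
  -- the two boundary terms are both `y⁻¹ * φ y` and cancel
  have hcancel : y ^ a * (y ^ (-a - 1) * φ y) = y ^ b * (y ^ (-b - 1) * φ y) := by
    rw [← mul_assoc, ← mul_assoc, ← Real.rpow_add hy, ← Real.rpow_add hy]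
    ring_nf
  exact (hdA.add hdB).congr_deriv (by rw [hcancel]; ring)

end EndpointDerivative

theorem stmt_10_general
    (θ n₁ n₂ : ℝ)
    (hn₂0 : n₂ < 0) (hn₁1 : 1 < n₁)
    (u u' I utld : ℝ → ℝ)
    (hu_conc : StrictConcaveOn ℝ (Set.Ici 0) u)
    (hu_deriv : ∀ c : ℝ, 0 < c → HasDerivAt u (u' c) c)
    (hI_pos : ∀ y : ℝ, 0 < y → 0 < I y)
    (hI_left : ∀ y : ℝ, 0 < y → u' (I y) = y)
    (hI_cont : ContinuousOn I (Set.Ioi 0))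
    (hutld : ∀ y : ℝ, 0 < y → utld y = u (I y) - y * I y)
    (hI_int : ∀ y : ℝ, 0 < y →
      MeasureTheory.IntegrableOn (fun η => η ^ (-n₂) * I η) (Set.Ioo 0 y) MeasureTheory.volume)
    (X_R : ℝ → ℝ)
    (hXR : ∀ y : ℝ, 0 < y → X_R y = (2 / (θ ^ 2 * (n₁ - n₂))) *
      (y ^ (n₂ - 1) * (∫ η in Set.Ioo 0 y, η ^ (-n₂) * I η) +
       y ^ (n₁ - 1) * ∫ η in Set.Ioi y, η ^ (-n₁) * I η))
    (J_R : ℝ → ℝ)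
    (hJR : ∀ y : ℝ, 0 < y → J_R y = (2 / (θ ^ 2 * (n₁ - n₂))) *
      (y ^ n₂ * (∫ η in Set.Ioo 0 y, η ^ (-n₂ - 1) * utld η) +
       y ^ n₁ * ∫ η in Set.Ioi y, η ^ (-n₁ - 1) * utld η))
    :
    ∀ y : ℝ, 0 < y →
      HasDerivAt J_R (-X_R y) y ∧
      (2 / (θ ^ 2 * (n₁ - n₂))) *
          (n₂ * y ^ (n₂ - 1) * (∫ η in Set.Ioo 0 y, η ^ (-n₂ - 1) * utld η) +
           n₁ * y ^ (n₁ - 1) * ∫ η in Set.Ioi y, η ^ (-n₁ - 1) * utld η) =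
        -((2 / (θ ^ 2 * (n₁ - n₂))) *
          (y ^ (n₂ - 1) * (∫ η in Set.Ioo 0 y, η ^ (-n₂) * I η) +
           y ^ (n₁ - 1) * ∫ η in Set.Ioi y, η ^ (-n₁) * I η)) := by
  have hderiv : ∀ x : ℝ, 0 < x → HasDerivAt utld (-I x) x := fun x hx =>
    (hasDerivAt_legendre hu_conc.concaveOn hu_deriv hI_pos hI_left hI_cont hx).congr_of_eventuallyEq
      (eventuallyEq_of_mem (Ioi_mem_nhds hx) hutld)
  have hlow : ∀ x : ℝ, 0 < x → u 0 ≤ utld x := fun x hx => by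
    simpa [hutld x hx] using sub_mul_le_legendre hu_conc.concaveOn hu_deriv hI_pos hI_left hx le_rfl
  have hright := fun (Y : ℝ) (hY : 0 < Y) =>
    integral_Ioi_rpow_neg_sub_one_mul_eq (n := n₁) (by linarith) hY
      (fun x hx => hderiv x (hY.trans_le hx)) (hI_cont.mono (Ioi_subset_Ioi hY.le))
      (fun x hx => (hI_pos x (hY.trans_le hx)).le) (fun x hx => hlow x (hY.trans_le hx))
  intro y hy
  obtain ⟨hA, hAval⟩ := integral_Ioo_rpow_sub_one_mul_eq (neg_pos.2 hn₂0) hy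
    (fun x hx => hderiv x hx.1) (hI_cont.mono fun x hx => hx.1) (fun x hx => (hI_pos x hx.1).le)
    (hI_int y hy)
  obtain ⟨-, -, hBval⟩ := hright y hy
  have hsum : n₂ * y ^ (n₂ - 1) * (∫ η in Ioo 0 y, η ^ (-n₂ - 1) * utld η) +
      n₁ * y ^ (n₁ - 1) * (∫ η in Ioi y, η ^ (-n₁ - 1) * utld η) =
      -(y ^ (n₂ - 1) * (∫ η in Ioo 0 y, η ^ (-n₂) * I η) +
        y ^ (n₁ - 1) * ∫ η in Ioi y, η ^ (-n₁) * I η) := by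
    have e₁ : y ^ (n₂ - 1) * y ^ (-n₂) = y ^ (n₁ - 1) * y ^ (-n₁) := by
      rw [← Real.rpow_add hy, ← Real.rpow_add hy]; ring_nf
    linear_combination -y ^ (n₂ - 1) * hAval + y ^ (n₁ - 1) * hBval - utld y * e₁
  refine ⟨?_, by rw [hsum, mul_neg]⟩
  rw [hXR y hy, ← mul_neg, ← hsum]
  refine ((hasDerivAt_rpow_mul_integral_Ioo_add_rpow_mul_integral_Ioi n₂ n₁ (half_pos hy).le
    (half_lt_self hy) (fun x hx => (hderiv x hx).continuousAt.continuousWithinAt) hA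
    (hright (y / 2) (half_pos hy)).2.1).const_mul _).congr_of_eventuallyEq ?_
  filter_upwards [Ioi_mem_nhds hy] with z hz using hJR z hz

/-- J_R is differentiable on (0,∞) with J_R′(y) = −X_R(y); equivalently the
displayed integral identity holds for every y > 0. -/
theorem stmt_10
    (δ r θ n₁ n₂ : ℝ)
    (hδ : 0 < δ) (hr : 0 < r) (hθ : θ ≠ 0)
    (hn₂0 : n₂ < 0) (hn₁1 : 1 < n₁)
    (hroot₁ : θ ^ 2 / 2 * n₁ ^ 2 + (δ - r - θ ^ 2 / 2) * n₁ - δ = 0)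
    (hroot₂ : θ ^ 2 / 2 * n₂ ^ 2 + (δ - r - θ ^ 2 / 2) * n₂ - δ = 0)
    (u u' I utld : ℝ → ℝ)
    (hu_mono : StrictMonoOn u (Set.Ici 0))
    (hu_conc : StrictConcaveOn ℝ (Set.Ici 0) u)
    (hu_cont : ContinuousOn u (Set.Ici 0))
    (hu_deriv : ∀ c : ℝ, 0 < c → HasDerivAt u (u' c) c)
    (hu'_cont : ContinuousOn u' (Set.Ioi 0))
    (hu'_top : Filter.Tendsto u' Filter.atTop (nhds 0))
    (hu'_zero : Filter.Tendsto u' (nhdsWithin 0 (Set.Ioi 0)) Filter.atTop)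
    (hI_pos : ∀ y : ℝ, 0 < y → 0 < I y)
    (hI_left : ∀ y : ℝ, 0 < y → u' (I y) = y)
    (hI_right : ∀ c : ℝ, 0 < c → I (u' c) = c)
    (hI_anti : StrictAntiOn I (Set.Ioi 0))
    (hI_cont : ContinuousOn I (Set.Ioi 0))
    (hI_zero : Filter.Tendsto I (nhdsWithin 0 (Set.Ioi 0)) Filter.atTop)
    (hI_top : Filter.Tendsto I Filter.atTop (nhds 0))
    (hutld : ∀ y : ℝ, 0 < y → utld y = u (I y) - y * I y)
    (hI_int : ∀ y : ℝ, 0 < y →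
      MeasureTheory.IntegrableOn (fun η => η ^ (-n₂) * I η) (Set.Ioo 0 y) MeasureTheory.volume)
    (X_R : ℝ → ℝ)
    (hXR : ∀ y : ℝ, 0 < y → X_R y = (2 / (θ ^ 2 * (n₁ - n₂))) *
      (y ^ (n₂ - 1) * (∫ η in Set.Ioo 0 y, η ^ (-n₂) * I η) +
       y ^ (n₁ - 1) * ∫ η in Set.Ioi y, η ^ (-n₁) * I η))
    (J_R : ℝ → ℝ)
    (hJR : ∀ y : ℝ, 0 < y → J_R y = (2 / (θ ^ 2 * (n₁ - n₂))) *
      (y ^ n₂ * (∫ η in Set.Ioo 0 y, η ^ (-n₂ - 1) * utld η) +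
       y ^ n₁ * ∫ η in Set.Ioi y, η ^ (-n₁ - 1) * utld η))
    :
    ∀ y : ℝ, 0 < y →
      HasDerivAt J_R (-X_R y) y ∧
      (2 / (θ ^ 2 * (n₁ - n₂))) *
          (n₂ * y ^ (n₂ - 1) * (∫ η in Set.Ioo 0 y, η ^ (-n₂ - 1) * utld η) +
           n₁ * y ^ (n₁ - 1) * ∫ η in Set.Ioi y, η ^ (-n₁ - 1) * utld η) =
        -((2 / (θ ^ 2 * (n₁ - n₂))) *
          (y ^ (n₂ - 1) * (∫ η in Set.Ioo 0 y, η ^ (-n₂) * I η) +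
           y ^ (n₁ - 1) * ∫ η in Set.Ioi y, η ^ (-n₁) * I η)) :=
  stmt_10_general θ n₁ n₂ hn₂0 hn₁1 u u' I utld hu_conc hu_deriv hI_pos hI_left hI_cont hutld hI_int
    X_R hXR J_R hJR
end
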